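/- arXiv:1701.07639 — 4 statements merged into one kernel-verified Lean document; each statement's English description precedes it below -/
import Mathlib

section
/- Let t ≥ 2 be an even integer and let ℓ ≥ 3 be an odd integer. Then there exist real constants c, C > 0 and an integer d₀ ≥ 1 such that for every integer d ≥ d₀: (a) every C_ℓ-free simple graph G with Δ(G) ≤ d satisfies χ_t(G) ≤ C · d^t, and (b) there exists a C_ℓ-free simple graph G with Δ(G) ≤ d and χ_t(G) ≥ c · d^t. (That is, the supremum of the distance-t chromatic number over C_ℓ-free graphs of maximum degree at most d is Θ(d^t) as d → ∞.) -/
/-- The `t`-th power of a simple graph `G`: two distinct vertices are adjacent iff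
there is a path with at most `t` edges between them in `G`. -/
def SimpleGraph.power {V : Type*} (G : SimpleGraph V) (t : ℕ) : SimpleGraph V where
  Adj u v := u ≠ v ∧ ∃ p : G.Walk u v, p.IsPath ∧ p.length ≤ t
  symm := by
    constructor
    rintro u v ⟨h, p, hp, hl⟩
    exact ⟨h.symm, p.reverse, hp.reverse, by simpa using hl⟩
  loopless := by constructor; rintro v ⟨h, -⟩; exact h rfl

/-- The distance-`t` chromatic number `χ_t(G)`. -/
noncomputable def distChromNum {V : Type*} (G : SimpleGraph V) (t : ℕ) : ℕ∞ :=
  (G.power t).chromaticNumber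

/-- The distance-`t` chromatic index `χ'_t(G)`. -/
noncomputable def distChromIndex {V : Type*} (G : SimpleGraph V) (t : ℕ) : ℕ∞ :=
  ((G.lineGraph).power t).chromaticNumber

/-- `G` contains no cycle of length `ℓ` as a subgraph. -/
def CycleFree {V : Type*} (G : SimpleGraph V) (ℓ : ℕ) : Prop :=
  ∀ (v : V) (p : G.Walk v v), p.IsCycle → p.length ≠ ℓ

/-- `G` is bipartite: the vertex set can be partitioned into two independent sets. -/
def BipartiteGraph {V : Type*} (G : SimpleGraph V) : Prop :=
  ∃ s : Set V, ∀ u v : V, G.Adj u v → (u ∈ s ↔ v ∉ s)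

/-!
Upper bound: in a graph of maximum degree `d`, at most `d ^ i` vertices are reached from a
vertex by walks of length exactly `i`, so `G ^ t` has maximum degree at most `(t + 1) d ^ t` and
greedy colouring uses at most `(t + 1) d ^ t + 1` colours.

Lower bound: take the bipartite double cover of the de Bruijn graph on words of length `t` over
an alphabet of `k = ⌊d / 2⌋` letters, where a word is joined to its left shifts. It has maximum
degree `2k ≤ d` and no odd cycles, and since `t` is even any two words on the same side are
joined by a walk of length `t` that slides a window of width `t` along their concatenation.
So these `k ^ t` words form a clique in the `t`-th power.
-/

open SimpleGraph

def deBruijnShift {α : Type*} {n : ℕ} (w : Fin (n + 1) → α) (a : α) : Fin (n + 1) → α :=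
  Fin.snoc (Fin.tail w) a

def slidingWindow {α : Type*} {n : ℕ} (u : ℕ → α) (i : ℕ) : Fin (n + 1) → α :=
  fun j => u (j + i)

theorem deBruijnShift_slidingWindow {α : Type*} {n : ℕ} (u : ℕ → α) (i : ℕ) :
    deBruijnShift (slidingWindow (n := n) u i) (u (i + n + 1)) = slidingWindow u (i + 1) := by
  funext j
  induction j using Fin.lastCases with
  | last =>
    simp only [deBruijnShift, slidingWindow, Fin.snoc_last, Fin.val_last]
    congr 1; ring
  | cast j =>
    simp only [deBruijnShift, slidingWindow, Fin.snoc_castSucc, Fin.tail, Fin.val_succ,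
      Fin.val_castSucc]
    congr 1; ring

namespace SimpleGraph

section Greedy

variable {V : Type*} (G : SimpleGraph V)

theorem exists_partial_coloring {D : ℕ} [Finite V] (hD : ∀ v, (G.neighborSet v).ncard ≤ D)
    (s : Finset V) :
    ∃ f : V → Fin (D + 1), ∀ u ∈ s, ∀ v ∈ s, G.Adj u v → f u ≠ f v := by
  classical
  induction s using Finset.induction_on with
  | empty => exact ⟨fun _ => 0, by simp⟩
  | @insert a s ha ih =>
    obtain ⟨f, hf⟩ := ih
    obtain ⟨c, hc⟩ : ∃ c, c ∉ f '' G.neighborSet a := by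
      by_contra! h
      have := (Set.ncard_image_le (s := G.neighborSet a) (f := f)).trans (hD a)
      rw [Set.eq_univ_of_forall h, Set.ncard_univ, Nat.card_eq_fintype_card,
        Fintype.card_fin] at this
      omega
    have hfresh : ∀ v ∈ s, G.Adj a v → c ≠ Function.update f a c v := fun v hv hav h => by
      rw [Function.update_of_ne (ne_of_mem_of_not_mem hv ha)] at h
      exact hc ⟨v, hav, h.symm⟩
    refine ⟨Function.update f a c, ?_⟩
    simp only [Finset.mem_insert]
    rintro u (rfl | hu) v (rfl | hv) huv
    · exact absurd huv (G.loopless.irrefl _)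
    · simpa using hfresh v hv huv
    · simpa using (hfresh u hu huv.symm).symm
    · rw [Function.update_of_ne (ne_of_mem_of_not_mem hu ha),
        Function.update_of_ne (ne_of_mem_of_not_mem hv ha)]
      exact hf u hu v hv huv

theorem colorable_succ_of_forall_ncard_neighborSet_le {D : ℕ} [Finite V]
    (hD : ∀ v, (G.neighborSet v).ncard ≤ D) : G.Colorable (D + 1) := by
  have := Fintype.ofFinite V
  obtain ⟨f, hf⟩ := G.exists_partial_coloring hD Finset.univ
  exact ⟨Coloring.mk f fun huv => hf _ (Finset.mem_univ _) _ (Finset.mem_univ _) huv⟩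

end Greedy

section Power

variable {V : Type*} (G : SimpleGraph V)

theorem power_adj_of_walk {t : ℕ} {u v : V} (p : G.Walk u v) (huv : u ≠ v)
    (hp : p.length ≤ t) : (G.power t).Adj u v := by
  classical exact ⟨huv, p.bypass, p.bypass_isPath, p.length_bypass_le_length.trans hp⟩

theorem ncard_setOf_walk_length_eq_le {D : ℕ} [Finite V]
    (hD : ∀ v, (G.neighborSet v).ncard ≤ D) :
    ∀ (i : ℕ) (v : V), {u | ∃ p : G.Walk v u, p.length = i}.ncard ≤ D ^ i
  | 0, v => by
    have hsub : {u | ∃ p : G.Walk v u, p.length = 0} ⊆ {v} := fun u ⟨p, hp⟩ =>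
      (p.eq_of_length_eq_zero hp).symm
    exact (Set.ncard_le_ncard hsub).trans_eq (by simp)
  | i + 1, v => by
    classical
    have hfin := (G.neighborSet v).toFinite
    have hsub : {u | ∃ p : G.Walk v u, p.length = i + 1} ⊆
        ⋃ w ∈ hfin.toFinset, {u | ∃ p : G.Walk w u, p.length = i} := by
      rintro u ⟨_ | ⟨hvw, q⟩, hq⟩
      · simp at hq
      simp only [Set.mem_iUnion, Set.Finite.mem_toFinset, mem_neighborSet]
      exact ⟨_, hvw, q, by simpa using hq⟩
    calc _ ≤ _ := Set.ncard_le_ncard hsub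
      _ ≤ ∑ w ∈ hfin.toFinset, {u | ∃ p : G.Walk w u, p.length = i}.ncard :=
        Finset.set_ncard_biUnion_le _ _
      _ ≤ hfin.toFinset.card * D ^ i :=
        Finset.sum_le_card_nsmul _ _ _ fun w _ => ncard_setOf_walk_length_eq_le hD i w
      _ ≤ D * D ^ i := by
        gcongr
        rw [← Set.ncard_eq_toFinset_card _ hfin]
        exact hD v
      _ = D ^ (i + 1) := by ring

theorem ncard_power_neighborSet_le {D : ℕ} [Finite V] (hD : ∀ v, (G.neighborSet v).ncard ≤ D)
    (hD₁ : 1 ≤ D) (t : ℕ) (v : V) :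
    ((G.power t).neighborSet v).ncard ≤ (t + 1) * D ^ t := by
  classical
  have hsub : (G.power t).neighborSet v ⊆
      ⋃ i ∈ Finset.range (t + 1), {u | ∃ p : G.Walk v u, p.length = i} := by
    rintro u ⟨-, p, -, hp⟩
    simp only [Set.mem_iUnion, Finset.mem_range]
    exact ⟨p.length, by omega, p, rfl⟩
  calc _ ≤ _ := Set.ncard_le_ncard hsub
    _ ≤ ∑ i ∈ Finset.range (t + 1), {u | ∃ p : G.Walk v u, p.length = i}.ncard :=
      Finset.set_ncard_biUnion_le _ _
    _ ≤ ∑ i ∈ Finset.range (t + 1), D ^ t := Finset.sum_le_sum fun i hi =>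
      (G.ncard_setOf_walk_length_eq_le hD i v).trans
        (Nat.pow_le_pow_right hD₁ (Nat.lt_succ_iff.mp (Finset.mem_range.mp hi)))
    _ = (t + 1) * D ^ t := by simp

theorem distChromNum_toNat_le {D : ℕ} [Finite V] (hD : ∀ v, (G.neighborSet v).ncard ≤ D)
    (hD₁ : 1 ≤ D) (t : ℕ) : (distChromNum G t).toNat ≤ (t + 1) * D ^ t + 1 :=
  ENat.toNat_le_of_le_natCast <| Colorable.chromaticNumber_le <|
    colorable_succ_of_forall_ncard_neighborSet_le _ (G.ncard_power_neighborSet_le hD hD₁ t)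

end Power

theorem cycleFree_of_coloring_bool {V : Type*} {G : SimpleGraph V} (c : G.Coloring Bool)
    {ℓ : ℕ} (hℓ : Odd ℓ) : CycleFree G ℓ := by
  rintro v p - rfl
  have := (c.odd_length_iff_not_congr p).mp hℓ
  simp at this

section DeBruijn

variable (α : Type*) (n : ℕ)

def bipartiteDeBruijn : SimpleGraph ((Fin (n + 1) → α) × Bool) :=
  fromRel fun x y => y.2 = !x.2 ∧ ∃ a, y.1 = deBruijnShift x.1 a

variable {α n}

namespace bipartiteDeBruijn

def sideColoring : (bipartiteDeBruijn α n).Coloring Bool :=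
  Coloring.mk Prod.snd <| by
    intro x y hxy
    rcases hxy with ⟨-, ⟨h, -⟩ | ⟨h, -⟩⟩ <;> simp [h]

theorem cycleFree {ℓ : ℕ} (hℓ : Odd ℓ) : CycleFree (bipartiteDeBruijn α n) ℓ :=
  cycleFree_of_coloring_bool sideColoring hℓ

theorem neighborSet_subset (x : (Fin (n + 1) → α) × Bool) :
    (bipartiteDeBruijn α n).neighborSet x ⊆ Set.range (Sum.elim
      (fun a => (deBruijnShift x.1 a, !x.2)) (fun a => (Fin.cons a (Fin.init x.1), !x.2))) := by
  rintro ⟨w, b⟩ ⟨-, ⟨rfl, a, rfl⟩ | ⟨hb, a, hw⟩⟩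
  · exact ⟨.inl a, rfl⟩
  · refine ⟨.inr (w 0), Prod.ext ?_ (by simp [hb])⟩
    simp only [Sum.elim_inr, hw, deBruijnShift, Fin.init_snoc, Fin.cons_self_tail]

theorem ncard_neighborSet_le [Fintype α] (x : (Fin (n + 1) → α) × Bool) :
    ((bipartiteDeBruijn α n).neighborSet x).ncard ≤ 2 * Fintype.card α := by
  calc _ ≤ _ := Set.ncard_le_ncard (neighborSet_subset x)
    _ ≤ (Set.univ : Set (α ⊕ α)).ncard := by rw [← Set.image_univ]; exact Set.ncard_image_le
    _ = 2 * Fintype.card α := by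
      rw [Set.ncard_univ, Nat.card_sum, Nat.card_eq_fintype_card]; ring

theorem exists_walk_slidingWindow (u : ℕ → α) :
    ∀ m, ∃ p : (bipartiteDeBruijn α n).Walk (slidingWindow u 0, false)
      (slidingWindow u m, m.bodd), p.length = m
  | 0 => ⟨.nil, rfl⟩
  | m + 1 => by
    obtain ⟨p, hp⟩ := exists_walk_slidingWindow u m
    have hadj : (bipartiteDeBruijn α n).Adj (slidingWindow u m, m.bodd)
        (slidingWindow u (m + 1), (m + 1).bodd) :=
      ⟨by simp, .inl ⟨by simp, _, (deBruijnShift_slidingWindow u m).symm⟩⟩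
    exact ⟨p.concat hadj, by simp [hp]⟩

theorem power_adj (hn : Even (n + 1)) {w w' : Fin (n + 1) → α} (hww' : w ≠ w') :
    ((bipartiteDeBruijn α n).power (n + 1)).Adj (w, false) (w', false) := by
  -- `u` is the concatenation `w ++ w'`.
  let u : ℕ → α := fun m =>
    if m < n + 1 then w (Fin.ofNat (n + 1) m) else w' (Fin.ofNat (n + 1) m)
  have h₀ : slidingWindow u 0 = w := by
    funext j
    simp only [slidingWindow, u, add_zero, if_pos j.isLt]
    exact congrArg w (Fin.ext (Nat.mod_eq_of_lt j.isLt))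
  have h₁ : slidingWindow u (n + 1) = w' := by
    funext j
    simp only [slidingWindow, u, if_neg (Nat.not_lt.mpr (Nat.le_add_left _ _))]
    exact congrArg w' (Fin.ext (by simp [Nat.mod_eq_of_lt j.isLt]))
  have hside : (n + 1).bodd = false := by
    obtain ⟨r, hr⟩ := hn
    rw [hr, Nat.bodd_add]; simp
  obtain ⟨p, hp⟩ := exists_walk_slidingWindow (n := n) u (n + 1)
  refine power_adj_of_walk _ (p.copy (by rw [h₀]) (by rw [h₁, hside])) (by simpa using hww') ?_
  rw [Walk.length_copy, hp]

theorem card_pow_le_distChromNum_toNat [Fintype α] (hn : Even (n + 1)) :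
    Fintype.card α ^ (n + 1) ≤ (distChromNum (bipartiteDeBruijn α n) (n + 1)).toNat := by
  let f : (⊤ : SimpleGraph (Fin (n + 1) → α)) →g (bipartiteDeBruijn α n).power (n + 1) :=
    ⟨fun w => (w, false), fun hww' => power_adj hn hww'⟩
  unfold distChromNum
  have hfin : ((bipartiteDeBruijn α n).power (n + 1)).chromaticNumber ≠ ⊤ :=
    chromaticNumber_ne_top_iff_exists.mpr ⟨_, colorable_of_fintype _⟩
  have := ENat.toNat_le_toNat (chromaticNumber_mono_of_hom f) hfin
  simpa only [chromaticNumber_top, Fintype.card_fun, Fintype.card_fin, ← Nat.cast_pow,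
    ENat.toNat_natCast] using this

end bipartiteDeBruijn

end DeBruijn

end SimpleGraph

theorem distance_chromatic_number_odd_cycle_free_no_reduction_general
    (t : ℕ) (ht : 2 ≤ t) (htEven : Even t) (ℓ : ℕ) (hℓOdd : Odd ℓ) :
    ∃ (c C : ℝ) (d₀ : ℕ), 0 < c ∧ 0 < C ∧ 1 ≤ d₀ ∧
      ∀ d : ℕ, d₀ ≤ d →
        ((∀ (V : Type) (_ : Fintype V) (G : SimpleGraph V),
            CycleFree G ℓ → (∀ v : V, (G.neighborSet v).ncard ≤ d) →
            ((distChromNum G t).toNat : ℝ) ≤ C * (d : ℝ) ^ t) ∧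
         (∃ (V : Type) (_ : Fintype V) (G : SimpleGraph V),
            CycleFree G ℓ ∧ (∀ v : V, (G.neighborSet v).ncard ≤ d) ∧
            c * (d : ℝ) ^ t ≤ ((distChromNum G t).toNat : ℝ))) := by
  obtain ⟨n, rfl⟩ : ∃ n, t = n + 1 := ⟨t - 1, by omega⟩
  refine ⟨4⁻¹ ^ (n + 1), n + 3, 2, by positivity, by positivity, by norm_num,
    fun d hd => ⟨fun V _ G _ hdeg => ?_, ?_⟩⟩
  · have hpow : (1 : ℝ) ≤ (d : ℝ) ^ (n + 1) := one_le_pow₀ (Nat.one_le_cast.mpr (by omega))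
    calc ((distChromNum G (n + 1)).toNat : ℝ) ≤ ((n + 2) * d ^ (n + 1) + 1 : ℕ) := by
          exact_mod_cast G.distChromNum_toNat_le hdeg (by omega) (n + 1)
      _ ≤ (n + 3) * (d : ℝ) ^ (n + 1) := by push_cast; linarith
  · refine ⟨_, inferInstance, bipartiteDeBruijn (Fin (d / 2)) n,
      bipartiteDeBruijn.cycleFree hℓOdd, fun x => ?_, ?_⟩
    · exact (bipartiteDeBruijn.ncard_neighborSet_le x).trans (by rw [Fintype.card_fin]; omega)
    · have hd4 : 4⁻¹ * (d : ℝ) ≤ ((d / 2 : ℕ) : ℝ) := by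
        rw [inv_mul_le_iff₀ (by norm_num)]
        exact_mod_cast (by omega : d ≤ 4 * (d / 2))
      have hχ := bipartiteDeBruijn.card_pow_le_distChromNum_toNat (α := Fin (d / 2)) htEven
      rw [Fintype.card_fin] at hχ
      calc 4⁻¹ ^ (n + 1) * (d : ℝ) ^ (n + 1) ≤ ((d / 2 : ℕ) : ℝ) ^ (n + 1) := by
            rw [← mul_pow]; gcongr
        _ ≤ _ := by exact_mod_cast hχ

/-- Proposition 3(1): for `t ≥ 2` even and `ℓ ≥ 3` odd, the supremum of the distance-`t`
chromatic number over `C_ℓ`-free graphs of maximum degree at most `d` is `Θ(d^t)`. -/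
theorem distance_chromatic_number_odd_cycle_free_no_reduction
    (t : ℕ) (ht : 2 ≤ t) (htEven : Even t) (ℓ : ℕ) (hℓ : 3 ≤ ℓ) (hℓOdd : Odd ℓ) :
    ∃ (c C : ℝ) (d₀ : ℕ), 0 < c ∧ 0 < C ∧ 1 ≤ d₀ ∧
      ∀ d : ℕ, d₀ ≤ d →
        ((∀ (V : Type) (_ : Fintype V) (G : SimpleGraph V),
            CycleFree G ℓ → (∀ v : V, (G.neighborSet v).ncard ≤ d) →
            ((distChromNum G t).toNat : ℝ) ≤ C * (d : ℝ) ^ t) ∧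
         (∃ (V : Type) (_ : Fintype V) (G : SimpleGraph V),
            CycleFree G ℓ ∧ (∀ v : V, (G.neighborSet v).ncard ≤ d) ∧
            c * (d : ℝ) ^ t ≤ ((distChromNum G t).toNat : ℝ))) :=
  distance_chromatic_number_odd_cycle_free_no_reduction_general t ht htEven ℓ hℓOdd
end

section
/- Let t ≥ 2 be an integer and let ℓ ≥ 3 be an odd integer. Then there exist real constants c, C > 0 and an integer d₀ ≥ 1 such that for every integer d ≥ d₀: (a) every C_ℓ-free simple graph G with Δ(G) ≤ d satisfies χ'_t(G) ≤ C · d^t, and (b) there exists a C_ℓ-free simple graph G with Δ(G) ≤ d and χ'_t(G) ≥ c · d^t. (That is, the supremum of the distance-t chromatic index over C_ℓ-free graphs of maximum degree at most d is Θ(d^t) as d → ∞.) -/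
/-!
The upper bound is greedy colouring: an edge of `G` meets at most `2d` other edges, so every vertex
of `L(G)^t` has its neighbours in a ball of radius `t` of `L(G)`, which has at most `(2d+1)^t`
elements counting the centre, and `(2d+1)^t ≤ (3d)^t`.

For the lower bound it suffices to take `G` bipartite. Let `H` be the point-line incidence graph of
the affine plane over `𝔽_q` plus a disjoint `K_{q,q}`: its degrees are at most `q + 1` and any two
points are at distance `2`. In the box power `G = H^{k+1}`, two tuples whose first `k` entries are
points are at distance at most `2k` plus the distance of their last entries. So for `t = 2k + 2`
the `q^{2k+2}` edges lying in a `K_{q,q}` in the last coordinate, and for `t = 2k + 1` the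
`q^{2k+1}` edges replacing the first point of a tuple by a non-vertical line through it, are such
that any two of them have endpoints at distance less than `t`: they form a clique of `L(G)^t`, while
`G` has degrees at most `t (q + 1)`. Bertrand's postulate provides a prime `q` with
`t (q + 1) ≤ d ≤ 4 t q`.
-/

namespace SimpleGraph

variable {V : Type*} {G : SimpleGraph V}

lemma power_adj_of_walk_s4 {t : ℕ} {u v : V} (hne : u ≠ v) (w : G.Walk u v) (hw : w.length ≤ t) :
    (G.power t).Adj u v := by
  classical
  exact ⟨hne, w.bypass, w.bypass_isPath, w.length_bypass_le_length.trans hw⟩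

lemma exists_lineGraph_walk_length_le {x y : V} (w : G.Walk x y) {e f : G.edgeSet}
    (hx : x ∈ (e : Sym2 V)) (hy : y ∈ (f : Sym2 V)) :
    ∃ q : G.lineGraph.Walk e f, q.length ≤ w.length + 1 := by
  induction w generalizing e with
  | nil =>
    by_cases h : e = f
    · subst h
      exact ⟨.nil, by simp⟩
    · exact ⟨.cons (lineGraph_adj_iff_exists.mpr ⟨h, _, hx, hy⟩) .nil, by simp⟩
  | @cons a b c hab w ih =>
    let g : G.edgeSet := ⟨s(a, b), hab⟩
    obtain ⟨q, hq⟩ := ih (e := g) (Sym2.mem_mk_right a b) hy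
    by_cases h : e = g
    · subst h
      exact ⟨q, by simp only [Walk.length_cons]; omega⟩
    · exact ⟨.cons (lineGraph_adj_iff_exists.mpr ⟨h, a, hx, Sym2.mem_mk_left a b⟩) q,
        by simp only [Walk.length_cons]; omega⟩

lemma card_le_distChromIndex_toNat [Finite V] {ι : Type*} [Fintype ι] {t : ℕ}
    (e : ι → G.edgeSet) (he : Function.Injective e)
    (hclose : ∀ a b, ∃ x ∈ (e a : Sym2 V), ∃ y ∈ (e b : Sym2 V), ∃ w : G.Walk x y, w.length < t) :
    Fintype.card ι ≤ (distChromIndex G t).toNat := by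
  classical
  have hclique : (G.lineGraph.power t).IsClique (Finset.univ.map ⟨e, he⟩ : Set G.edgeSet) := by
    rintro _ ha _ hb hne
    obtain ⟨a, -, rfl⟩ := Finset.mem_map.mp ha
    obtain ⟨b, -, rfl⟩ := Finset.mem_map.mp hb
    obtain ⟨x, hx, y, hy, w, hw⟩ := hclose a b
    obtain ⟨q, hq⟩ := exists_lineGraph_walk_length_le w hx hy
    exact power_adj_of_walk_s4 hne q (by omega)
  have hcard := hclique.card_le_chromaticNumber
  rw [Finset.card_map, Finset.card_univ] at hcard
  have := Fintype.ofFinite G.edgeSet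
  have hfin : (G.lineGraph.power t).chromaticNumber ≠ ⊤ :=
    chromaticNumber_ne_top_iff_exists.mpr ⟨_, colorable_of_fintype _⟩
  simpa [distChromIndex] using ENat.toNat_le_toNat hcard hfin

lemma ncard_neighborSet_lineGraph_le [Finite V] {D : ℕ} (hD : ∀ v, (G.neighborSet v).ncard ≤ D)
    (e : G.edgeSet) : (G.lineGraph.neighborSet e).ncard ≤ 2 * D := by
  obtain ⟨e, he⟩ := e
  induction e using Sym2.ind with | h a b => ?_
  have hsub : Subtype.val '' G.lineGraph.neighborSet ⟨s(a, b), he⟩ ⊆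
      G.incidenceSet a ∪ G.incidenceSet b := by
    rintro _ ⟨f, hf, rfl⟩
    obtain ⟨-, x, hx, hxf⟩ := lineGraph_adj_iff_exists.mp hf
    rcases Sym2.mem_iff.mp hx with rfl | rfl
    · exact .inl ⟨f.2, hxf⟩
    · exact .inr ⟨f.2, hxf⟩
  have hinc (v : V) : (G.incidenceSet v).ncard ≤ D := by
    classical
    rw [Set.ncard_congr' (G.incidenceSetEquivNeighborSet v)]
    exact hD v
  calc _ = (Subtype.val '' G.lineGraph.neighborSet ⟨s(a, b), he⟩).ncard :=
        (Set.ncard_image_of_injective _ Subtype.val_injective).symm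
    _ ≤ (G.incidenceSet a ∪ G.incidenceSet b).ncard := Set.ncard_le_ncard hsub (Set.toFinite _)
    _ ≤ (G.incidenceSet a).ncard + (G.incidenceSet b).ncard := Set.ncard_union_le _ _
    _ ≤ 2 * D := by linarith [hinc a, hinc b]

lemma ball_add_two_subset (v : V) (r : ℕ) :
    G.ball v (r + 2) ⊆ ⋃ u ∈ G.ball v (r + 1), insert u (G.neighborSet u) := by
  intro w hw
  have hlt : G.edist w v < r + 2 := hw
  obtain ⟨p, hp⟩ := exists_walk_of_edist_ne_top (hlt.trans_le le_top).ne
  simp only [Set.mem_iUnion]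
  cases p with
  | nil => exact ⟨v, mem_ball_self (by simp), Set.mem_insert v _⟩
  | @cons _ u _ hwu q =>
    refine ⟨u, ?_, Set.mem_insert_of_mem _ hwu.symm⟩
    have hq : (q.length : ℕ∞) < r + 1 := by
      rw [← hp, Walk.length_cons] at hlt
      have : q.length + 1 < r + 2 := by exact_mod_cast hlt
      exact_mod_cast (by omega : q.length < r + 1)
    exact (edist_le q).trans_lt hq

lemma ncard_ball_le [Finite V] {D : ℕ} (hD : ∀ v, (G.neighborSet v).ncard ≤ D) (v : V) (r : ℕ) :
    (G.ball v (r + 1)).ncard ≤ (D + 1) ^ r := by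
  induction r with
  | zero => simp
  | succ r ih =>
    have hfin := (G.ball v (r + 1)).toFinite
    calc (G.ball v (↑(r + 1) + 1)).ncard
        ≤ (⋃ u ∈ hfin.toFinset, insert u (G.neighborSet u)).ncard := by
          refine Set.ncard_le_ncard ?_ (Set.toFinite _)
          simpa [one_add_one_eq_two, add_assoc] using ball_add_two_subset v r
      _ ≤ ∑ u ∈ hfin.toFinset, (insert u (G.neighborSet u)).ncard := Finset.set_ncard_biUnion_le _ _
      _ ≤ ∑ _u ∈ hfin.toFinset, (D + 1) :=
          Finset.sum_le_sum fun u _ => (Set.ncard_insert_le _ _).trans (by linarith [hD u])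
      _ = (G.ball v (r + 1)).ncard * (D + 1) := by
          rw [Finset.sum_const, smul_eq_mul, Set.ncard_eq_toFinset_card _ hfin]
      _ ≤ (D + 1) ^ (r + 1) := by rw [pow_succ]; gcongr

lemma ncard_neighborSet_power_lt [Finite V] {D : ℕ} (hD : ∀ v, (G.neighborSet v).ncard ≤ D)
    (t : ℕ) (v : V) : ((G.power t).neighborSet v).ncard < (D + 1) ^ t := by
  have hsub : (G.power t).neighborSet v ⊂ G.ball v (t + 1) := by
    refine Set.ssubset_iff_of_subset ?_ |>.mpr ⟨v, mem_ball_self (by simp), (G.power t).irrefl⟩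
    rintro w ⟨-, p, -, hp⟩
    have : (p.reverse.length : ℕ∞) < t + 1 := by
      rw [Walk.length_reverse]
      exact_mod_cast Nat.lt_succ_of_le hp
    exact (edist_le _).trans_lt this
  exact (Set.ncard_lt_ncard hsub (Set.toFinite _)).trans_le (ncard_ball_le hD v t)

theorem colorable_of_ncard_neighborSet_lt [Finite V] {n : ℕ}
    (h : ∀ v, (G.neighborSet v).ncard < n) : G.Colorable n := by
  classical
  cases nonempty_fintype V
  rcases isEmpty_or_nonempty V with hV | ⟨⟨v₀⟩⟩
  · exact .of_isEmpty n
  suffices ∀ s : Finset V, ∃ f : V → Fin n, ∀ u ∈ s, ∀ v ∈ s, G.Adj u v → f u ≠ f v by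
    obtain ⟨f, hf⟩ := this Finset.univ
    exact ⟨.mk f fun huv => hf _ (Finset.mem_univ _) _ (Finset.mem_univ _) huv⟩
  intro s
  induction s using Finset.induction_on with
  | empty => exact ⟨fun _ => ⟨0, (Nat.zero_le _).trans_lt (h v₀)⟩, by simp⟩
  | insert a s ha ih =>
    obtain ⟨f, hf⟩ := ih
    have hfree : f '' G.neighborSet a ≠ Set.univ := by
      intro huniv
      have := (Set.ncard_image_le (f := f) (Set.toFinite _)).trans_lt (h a)
      simp [huniv] at this
    obtain ⟨c, hc⟩ := (Set.ne_univ_iff_exists_notMem _).mp hfree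
    have hca (v : V) (hav : G.Adj a v) : Function.update f a c a ≠ Function.update f a c v := by
      rw [Function.update_self, Function.update_of_ne (G.ne_of_adj hav).symm]
      exact fun hcv => hc ⟨v, hav, hcv.symm⟩
    refine ⟨Function.update f a c, fun u hu v hv huv => ?_⟩
    rcases Finset.mem_insert.mp hu with rfl | hu
    · exact hca v huv
    rcases Finset.mem_insert.mp hv with rfl | hv
    · exact (hca u huv.symm).symm
    rw [Function.update_of_ne (ne_of_mem_of_not_mem hu ha),
      Function.update_of_ne (ne_of_mem_of_not_mem hv ha)]
    exact hf u hu v hv huv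

theorem distChromIndex_toNat_le [Finite V] {d : ℕ} (hd : ∀ v, (G.neighborSet v).ncard ≤ d)
    (t : ℕ) : (distChromIndex G t).toNat ≤ (2 * d + 1) ^ t :=
  ENat.toNat_le_of_le_natCast <| Colorable.chromaticNumber_le <|
    colorable_of_ncard_neighborSet_lt <|
      ncard_neighborSet_power_lt (ncard_neighborSet_lineGraph_le hd) t

lemma IsBipartite.cycleFree (hG : G.IsBipartite) {ℓ : ℕ} (hℓ : Odd ℓ) : CycleFree G ℓ := by
  rintro v p - rfl
  have := (p.three_le_chromaticNumber_of_odd_loop hℓ).trans hG.chromaticNumber_le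
  norm_num at this

section boxPi

variable {ι U : Type*} {H : SimpleGraph U}

def boxPi (ι : Type*) (H : SimpleGraph U) : SimpleGraph (ι → U) where
  Adj x y := ∃ i, H.Adj (x i) (y i) ∧ ∀ j ≠ i, x j = y j
  symm := ⟨fun _ _ ⟨i, h, hj⟩ => ⟨i, h.symm, fun j hji => (hj j hji).symm⟩⟩
  loopless := ⟨fun _ ⟨_, h, _⟩ => H.irrefl h⟩

@[simp]
lemma boxPi_adj {x y : ι → U} :
    (boxPi ι H).Adj x y ↔ ∃ i, H.Adj (x i) (y i) ∧ ∀ j ≠ i, x j = y j :=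
  Iff.rfl

def Coloring.boxPi [Fintype ι] {α : Type*} [AddCancelCommMonoid α] (c : H.Coloring α) :
    (boxPi ι H).Coloring α := by
  classical
  refine Coloring.mk (fun x => ∑ i, c (x i)) fun {x y} hxy hsum => ?_
  obtain ⟨i, hi, hj⟩ := boxPi_adj.mp hxy
  have hrest : ∑ j ∈ Finset.univ.erase i, c (x j) = ∑ j ∈ Finset.univ.erase i, c (y j) :=
    Finset.sum_congr rfl fun j hj' => by rw [hj j (Finset.ne_of_mem_erase hj')]
  rw [← Finset.add_sum_erase _ _ (Finset.mem_univ i),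
    ← Finset.add_sum_erase _ _ (Finset.mem_univ i), hrest] at hsum
  exact c.valid hi (add_right_cancel hsum)

lemma IsBipartite.boxPi [Fintype ι] (hH : H.IsBipartite) : (boxPi ι H).IsBipartite := by
  obtain ⟨c⟩ := hH
  simpa using (Coloring.boxPi (α := ZMod 2) c).colorable

variable [DecidableEq ι]

def boxPi.updateHom (x : ι → U) (i : ι) : H →g boxPi ι H where
  toFun u := Function.update x i u
  map_rel' {u v} huv := ⟨i, by simpa using huv, fun j hj => by simp [hj]⟩

@[simp]
lemma boxPi.coe_updateHom (x : ι → U) (i : ι) :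
    ⇑(boxPi.updateHom (H := H) x i) = Function.update x i :=
  rfl

lemma exists_boxPi_walk_length_le [Fintype ι] {x y : ι → U} (c : ι → ℕ)
    (h : ∀ i, ∃ w : H.Walk (x i) (y i), w.length ≤ c i) :
    ∃ q : (boxPi ι H).Walk x y, q.length ≤ ∑ i, c i := by
  suffices ∀ s : Finset ι, ∃ q : (boxPi ι H).Walk x (s.piecewise y x), q.length ≤ ∑ i ∈ s, c i by
    obtain ⟨q, hq⟩ := this Finset.univ
    exact ⟨q.copy rfl (funext fun j => by simp), by simpa using hq⟩
  intro s
  induction s using Finset.induction_on with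
  | empty => exact ⟨Walk.nil.copy rfl (by simp), by simp⟩
  | insert i s hi ih =>
    obtain ⟨q, hq⟩ := ih
    obtain ⟨w, hw⟩ := h i
    obtain ⟨step, hstep⟩ : ∃ step : (boxPi ι H).Walk (s.piecewise y x) ((insert i s).piecewise y x),
        step.length = w.length :=
      ⟨(w.map (boxPi.updateHom (s.piecewise y x) i)).copy
        (by simp [Finset.piecewise_eq_of_notMem _ _ _ hi])
        (by simp [Finset.piecewise_insert]), (Walk.length_copy _ _ _).trans (Walk.length_map _ _)⟩
    refine ⟨q.append step, ?_⟩
    rw [Walk.length_append, hstep, Finset.sum_insert hi]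
    omega

lemma ncard_neighborSet_boxPi_le [Fintype ι] [Finite U] {D : ℕ}
    (hD : ∀ u, (H.neighborSet u).ncard ≤ D) (x : ι → U) :
    ((boxPi ι H).neighborSet x).ncard ≤ Fintype.card ι * D := by
  have hsub : (boxPi ι H).neighborSet x ⊆
      ⋃ i ∈ (Finset.univ : Finset ι), Function.update x i '' H.neighborSet (x i) := by
    intro y hy
    obtain ⟨i, hi, hj⟩ := boxPi_adj.mp hy
    simp only [Set.mem_iUnion]
    refine ⟨i, Finset.mem_univ _, y i, hi, funext fun j => ?_⟩
    by_cases hji : j = i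
    · subst hji; simp
    · simp [hji, hj j hji]
  calc _ ≤ _ := Set.ncard_le_ncard hsub (Set.toFinite _)
    _ ≤ ∑ i, (Function.update x i '' H.neighborSet (x i)).ncard :=
        Finset.set_ncard_biUnion_le _ _
    _ ≤ ∑ _i : ι, D := Finset.sum_le_sum fun i _ =>
        (Set.ncard_image_le (Set.toFinite _)).trans (hD _)
    _ = Fintype.card ι * D := by simp

end boxPi

section incidenceGraph

variable {α β : Type*}

def incidenceGraph (r : α → β → Prop) : SimpleGraph (α ⊕ β) where
  Adj
    | .inl a, .inr b => r a b
    | .inr b, .inl a => r a b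
    | _, _ => False
  symm := ⟨by rintro (a | b) (a' | b') h <;> exact h⟩
  loopless := ⟨by rintro (a | b) h <;> exact h⟩

variable {r : α → β → Prop}

lemma isBipartite_incidenceGraph (r : α → β → Prop) : (incidenceGraph r).IsBipartite := by
  simpa using (Coloring.mk (G := incidenceGraph r) Sum.isRight <| by
    rintro (a | b) (a' | b') h <;> first | exact h.elim | simp).colorable

lemma neighborSet_incidenceGraph_inl (a : α) :
    (incidenceGraph r).neighborSet (.inl a) = .inr '' {b | r a b} := by
  ext (a' | b) <;> simp [incidenceGraph]

lemma neighborSet_incidenceGraph_inr (b : β) :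
    (incidenceGraph r).neighborSet (.inr b) = .inl '' {a | r a b} := by
  ext (a | b') <;> simp [incidenceGraph]

lemma ncard_neighborSet_incidenceGraph_le {D : ℕ} (hα : ∀ a, {b | r a b}.ncard ≤ D)
    (hβ : ∀ b, {a | r a b}.ncard ≤ D) :
    ∀ v, ((incidenceGraph r).neighborSet v).ncard ≤ D
  | .inl a => by
    rw [neighborSet_incidenceGraph_inl, Set.ncard_image_of_injective _ Sum.inr_injective]
    exact hα a
  | .inr b => by
    rw [neighborSet_incidenceGraph_inr, Set.ncard_image_of_injective _ Sum.inl_injective]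
    exact hβ b

end incidenceGraph

end SimpleGraph

open SimpleGraph

namespace AffinePlane

section

variable {F : Type*} [Field F]

variable (F) in
/-- Incidence in the affine plane over `F`: `inl (m, c)` is the line `y = m x + c` and `inr a` the
vertical line `x = a`. -/
def OnLine : F × F → F × F ⊕ F → Prop
  | P, .inl (m, c) => P.2 = m * P.1 + c
  | P, .inr a => P.1 = a

lemma exists_onLine_onLine (P Q : F × F) : ∃ l, OnLine F P l ∧ OnLine F Q l := by
  rcases eq_or_ne P.1 Q.1 with h | h
  · exact ⟨.inr P.1, rfl, h.symm⟩
  · have hne : Q.1 - P.1 ≠ 0 := sub_ne_zero.mpr h.symm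
    refine ⟨.inl ((Q.2 - P.2) / (Q.1 - P.1), P.2 - (Q.2 - P.2) / (Q.1 - P.1) * P.1), ?_, ?_⟩
    · show P.2 = _ * P.1 + (P.2 - _ * P.1)
      ring
    · show Q.2 = _ * Q.1 + (P.2 - _ * P.1)
      field_simp
      ring

variable (F) in
abbrev Vert := (F × F ⊕ F) ⊕ ((F × F ⊕ F) ⊕ F)

abbrev point (P : F × F) : Vert F := .inl (.inl P)
abbrev line (l : F × F ⊕ F) : Vert F := .inr (.inl l)
abbrev left (i : F) : Vert F := .inl (.inr i)
abbrev right (j : F) : Vert F := .inr (.inr j)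

variable (F) in
/-- The point-line incidence graph of the affine plane over `F`, together with a disjoint complete
bipartite graph between the vertices `left i` and `right j`. -/
def baseGraph : SimpleGraph (Vert F) :=
  incidenceGraph (Sum.LiftRel (OnLine F) fun _ _ : F => True)

lemma baseGraph_adj_point_line {P : F × F} {l : F × F ⊕ F} (h : OnLine F P l) :
    (baseGraph F).Adj (point P) (line l) :=
  Sum.LiftRel.inl h

lemma baseGraph_adj_left_right (i j : F) : (baseGraph F).Adj (left i) (right j) :=
  Sum.LiftRel.inr trivial

lemma exists_baseGraph_walk_point_point (P Q : F × F) :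
    ∃ w : (baseGraph F).Walk (point P) (point Q), w.length = 2 := by
  obtain ⟨l, hP, hQ⟩ := exists_onLine_onLine P Q
  exact ⟨.cons (baseGraph_adj_point_line hP) (.cons (baseGraph_adj_point_line hQ).symm .nil), rfl⟩

lemma isBipartite_baseGraph : (baseGraph F).IsBipartite :=
  isBipartite_incidenceGraph _

def lineThrough (P : F × F) (m : F) : F × F ⊕ F := .inl (m, P.2 - m * P.1)

lemma onLine_lineThrough (P : F × F) (m : F) : OnLine F P (lineThrough P m) := by
  show _ = _
  ring

variable [Fintype F]

lemma ncard_setOf_onLine_le (P : F × F) : {l | OnLine F P l}.ncard ≤ Fintype.card F + 1 := by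
  have hsub : {l | OnLine F P l} ⊆ insert (.inr P.1) (Set.range (lineThrough P)) := by
    rintro (⟨m, c⟩ | a) (h : _ = _)
    · exact .inr ⟨m, by simp [lineThrough, h]⟩
    · exact .inl (by rw [h])
  calc _ ≤ _ := Set.ncard_le_ncard hsub (Set.toFinite _)
    _ ≤ _ := Set.ncard_insert_le _ _
    _ ≤ Fintype.card F + 1 := by
      gcongr
      exact (Finite.card_range_le _).trans_eq Nat.card_eq_fintype_card

lemma ncard_onLine_le (l : F × F ⊕ F) : {P | OnLine F P l}.ncard ≤ Fintype.card F := by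
  obtain ⟨f, hf⟩ : ∃ f : F → F × F, {P | OnLine F P l} ⊆ Set.range f := by
    rcases l with ⟨m, c⟩ | a
    · exact ⟨fun x => (x, m * x + c), fun P (h : _ = _) => ⟨P.1, Prod.ext rfl h.symm⟩⟩
    · exact ⟨fun y => (a, y), fun P (h : _ = _) => ⟨P.2, Prod.ext h.symm rfl⟩⟩
  exact (Set.ncard_le_ncard hf (Set.toFinite _)).trans <|
    (Finite.card_range_le _).trans_eq Nat.card_eq_fintype_card

lemma ncard_neighborSet_baseGraph_le (v : Vert F) :
    ((baseGraph F).neighborSet v).ncard ≤ Fintype.card F + 1 := by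
  have hrange (γ : Type _) : (Set.range (Sum.inr : F → γ ⊕ F)).ncard ≤ Fintype.card F + 1 :=
    (Finite.card_range_le _).trans (by simp)
  refine ncard_neighborSet_incidenceGraph_le (fun a => ?_) (fun b => ?_) v
  · rcases a with P | i
    · have : {b | Sum.LiftRel (OnLine F) (fun _ _ : F => True) (.inl P) b} =
          .inl '' {l | OnLine F P l} := by
        ext (_ | _) <;> simp
      rw [this, Set.ncard_image_of_injective _ Sum.inl_injective]
      exact ncard_setOf_onLine_le P
    · refine (Set.ncard_le_ncard ?_ (Set.toFinite _)).trans (hrange _)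
      rintro (_ | _) h <;> simp_all
  · rcases b with l | j
    · have : {a | Sum.LiftRel (OnLine F) (fun _ _ : F => True) a (.inl l)} =
          .inl '' {P | OnLine F P l} := by
        ext (_ | _) <;> simp
      rw [this, Set.ncard_image_of_injective _ Sum.inl_injective]
      exact (ncard_onLine_le l).trans (Nat.le_succ _)
    · refine (Set.ncard_le_ncard ?_ (Set.toFinite _)).trans (hrange _)
      rintro (_ | _) h <;> simp_all

end

variable {F : Type*} {k : ℕ}

def pointsWith (x : Fin k → F × F) (z : Vert F) : Option (Fin k) → Vert F :=
  fun o => o.elim z fun i => point (x i)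

@[simp] lemma pointsWith_none (x : Fin k → F × F) (z : Vert F) : pointsWith x z none = z := rfl

@[simp] lemma pointsWith_some (x : Fin k → F × F) (z : Vert F) (i : Fin k) :
    pointsWith x z (some i) = point (x i) := rfl

lemma pointsWith_inj {x y : Fin k → F × F} {z z' : Vert F} :
    pointsWith x z = pointsWith y z' ↔ x = y ∧ z = z' := by
  refine ⟨fun h => ⟨funext fun i => ?_, by simpa using congrFun h none⟩, by rintro ⟨rfl, rfl⟩; rfl⟩
  simpa using congrFun h (some i)

variable [Field F]

lemma exists_walk_pointsWith (x y : Fin k → F × F) {z z' : Vert F} (w : (baseGraph F).Walk z z') :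
    ∃ q : (boxPi (Option (Fin k)) (baseGraph F)).Walk (pointsWith x z) (pointsWith y z'),
      q.length ≤ 2 * k + w.length := by
  obtain ⟨q, hq⟩ := exists_boxPi_walk_length_le (x := pointsWith x z) (y := pointsWith y z')
    (fun o => o.elim w.length fun _ => 2) <| by
      rintro (_ | i)
      · exact ⟨w, le_rfl⟩
      · obtain ⟨w', hw'⟩ := exists_baseGraph_walk_point_point (x i) (y i)
        exact ⟨w', hw'.le⟩
  refine ⟨q, hq.trans ?_⟩
  simp [Fintype.sum_option]
  omega

variable [Fintype F]

theorem pow_le_distChromIndex_boxPi_even (k : ℕ) :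
    Fintype.card F ^ (2 * k + 2) ≤
      (distChromIndex (boxPi (Option (Fin k)) (baseGraph F)) (2 * k + 2)).toNat := by
  classical
  let e (a : (Fin k → F × F) × F × F) : (boxPi (Option (Fin k)) (baseGraph F)).edgeSet :=
    ⟨s(pointsWith a.1 (left a.2.1), pointsWith a.1 (right a.2.2)), boxPi_adj.mpr
      ⟨none, baseGraph_adj_left_right _ _, by rintro (_ | i) h <;> simp_all⟩⟩
  have he : Function.Injective e := by
    rintro ⟨x, i, j⟩ ⟨y, i', j'⟩ h
    rcases Sym2.eq_iff.mp (Subtype.ext_iff.mp h) with ⟨h₁, h₂⟩ | ⟨h₁, -⟩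
    · obtain ⟨rfl, hi⟩ := pointsWith_inj.mp h₁
      obtain ⟨-, hj⟩ := pointsWith_inj.mp h₂
      simp_all
    · simpa using congrFun h₁ none
  have hclose (a b) : ∃ u ∈ (e a : Sym2 _), ∃ v ∈ (e b : Sym2 _),
      ∃ w : (boxPi (Option (Fin k)) (baseGraph F)).Walk u v, w.length < 2 * k + 2 := by
    obtain ⟨q, hq⟩ := exists_walk_pointsWith a.1 b.1
      (.cons (baseGraph_adj_left_right a.2.1 b.2.2) .nil)
    exact ⟨_, Sym2.mem_mk_left _ _, _, Sym2.mem_mk_right _ _, q, by simp at hq; omega⟩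
  have := card_le_distChromIndex_toNat e he hclose
  simp only [Fintype.card_prod, Fintype.card_fun, Fintype.card_fin] at this
  convert this using 1
  ring

theorem pow_le_distChromIndex_boxPi_odd {k : ℕ} (hk : 0 < k) :
    Fintype.card F ^ (2 * k + 1) ≤
      (distChromIndex (boxPi (Option (Fin k)) (baseGraph F)) (2 * k + 1)).toNat := by
  classical
  let i₀ : Option (Fin k) := some ⟨0, hk⟩
  let through (x : Fin k → F × F) (m : F) : Option (Fin k) → Vert F :=
    Function.update (pointsWith x (left 0)) i₀ (line (lineThrough (x ⟨0, hk⟩) m))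
  let e (a : (Fin k → F × F) × F) : (boxPi (Option (Fin k)) (baseGraph F)).edgeSet :=
    ⟨s(pointsWith a.1 (left 0), through a.1 a.2), boxPi_adj.mpr
      ⟨i₀, by simpa [through, i₀] using baseGraph_adj_point_line (onLine_lineThrough _ _),
        fun j hj => by simp [through, hj]⟩⟩
  have he : Function.Injective e := by
    rintro ⟨x, m⟩ ⟨y, m'⟩ h
    rcases Sym2.eq_iff.mp (Subtype.ext_iff.mp h) with ⟨h₁, h₂⟩ | ⟨h₁, -⟩
    · obtain ⟨rfl, -⟩ := pointsWith_inj.mp h₁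
      have := congrFun h₂ i₀
      simp_all [through, i₀, lineThrough]
    · simpa [through, i₀] using congrFun h₁ i₀
  have hclose (a b) : ∃ u ∈ (e a : Sym2 _), ∃ v ∈ (e b : Sym2 _),
      ∃ w : (boxPi (Option (Fin k)) (baseGraph F)).Walk u v, w.length < 2 * k + 1 := by
    obtain ⟨q, hq⟩ := exists_walk_pointsWith a.1 b.1 (.nil : (baseGraph F).Walk (left 0) (left 0))
    exact ⟨_, Sym2.mem_mk_left _ _, _, Sym2.mem_mk_left _ _, q, by simp at hq; omega⟩
  have := card_le_distChromIndex_toNat e he hclose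
  simp only [Fintype.card_prod, Fintype.card_fun, Fintype.card_fin] at this
  convert this using 1
  ring

end AffinePlane

theorem exists_isBipartite_pow_le_distChromIndex (F : Type) [Field F] [Fintype F] {t : ℕ}
    (ht : 2 ≤ t) :
    ∃ (V : Type) (_ : Fintype V) (G : SimpleGraph V), G.IsBipartite ∧
      (∀ v, (G.neighborSet v).ncard ≤ t * (Fintype.card F + 1)) ∧
      Fintype.card F ^ t ≤ (distChromIndex G t).toNat := by
  classical
  obtain ⟨k, hk, hχ⟩ : ∃ k, k + 1 ≤ t ∧ Fintype.card F ^ t ≤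
      (distChromIndex (boxPi (Option (Fin k)) (AffinePlane.baseGraph F)) t).toNat := by
    obtain ⟨k, rfl | rfl⟩ := Nat.even_or_odd' t
    · obtain ⟨k, rfl⟩ : ∃ k', k = k' + 1 := Nat.exists_eq_add_of_le' (by omega)
      exact ⟨k, by omega, AffinePlane.pow_le_distChromIndex_boxPi_even k⟩
    · exact ⟨k, by omega, AffinePlane.pow_le_distChromIndex_boxPi_odd (by omega)⟩
  refine ⟨_, inferInstance, boxPi (Option (Fin k)) (AffinePlane.baseGraph F),
    AffinePlane.isBipartite_baseGraph.boxPi, fun v => ?_, hχ⟩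
  calc _ ≤ Fintype.card (Option (Fin k)) * (Fintype.card F + 1) :=
        ncard_neighborSet_boxPi_le AffinePlane.ncard_neighborSet_baseGraph_le v
    _ ≤ t * (Fintype.card F + 1) := by gcongr; simpa using hk

lemma exists_prime_mul_succ_le_le_mul {t d : ℕ} (ht : 1 ≤ t) (hd : 8 * t ≤ d) :
    ∃ q, q.Prime ∧ t * (q + 1) ≤ d ∧ d ≤ 4 * t * q := by
  have h4t : 0 < 4 * t := by omega
  obtain ⟨q, hq, hnq, hqn⟩ :=
    Nat.exists_prime_lt_and_le_two_mul (d / (4 * t)) (Nat.div_pos (by omega) h4t).ne'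
  have hdiv := Nat.div_mul_le_self d (4 * t)
  have hlt := Nat.lt_mul_div_succ d h4t
  refine ⟨q, hq, ?_, ?_⟩ <;> nlinarith

lemma distChromIndex_toNat_le_three_pow_mul_pow {V : Type*} [Finite V] {G : SimpleGraph V} {d : ℕ}
    (hd1 : 1 ≤ d) (hd : ∀ v, (G.neighborSet v).ncard ≤ d) (t : ℕ) :
    ((distChromIndex G t).toNat : ℝ) ≤ 3 ^ t * (d : ℝ) ^ t := by
  have hd1 : (1 : ℝ) ≤ d := by exact_mod_cast hd1
  calc ((distChromIndex G t).toNat : ℝ) ≤ ((2 * d + 1 : ℕ) : ℝ) ^ t := by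
        exact_mod_cast distChromIndex_toNat_le hd t
    _ ≤ (3 * d : ℝ) ^ t := by push_cast; gcongr; linarith
    _ = 3 ^ t * (d : ℝ) ^ t := mul_pow _ _ _

lemma exists_cycleFree_div_pow_le_distChromIndex {t ℓ d : ℕ} (ht : 2 ≤ t) (hℓ : Odd ℓ)
    (hd : 8 * t ≤ d) :
    ∃ (V : Type) (_ : Fintype V) (G : SimpleGraph V), CycleFree G ℓ ∧
      (∀ v, (G.neighborSet v).ncard ≤ d) ∧
      ((d : ℝ) / (4 * t)) ^ t ≤ (distChromIndex G t).toNat := by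
  obtain ⟨q, hq, hdeg, hdq⟩ := exists_prime_mul_succ_le_le_mul (by omega : 1 ≤ t) hd
  have := Fact.mk hq
  obtain ⟨V, hV, G, hbip, hG, hχ⟩ := exists_isBipartite_pow_le_distChromIndex (ZMod q) ht
  rw [ZMod.card] at hG hχ
  refine ⟨V, hV, G, hbip.cycleFree hℓ, fun v => (hG v).trans hdeg, ?_⟩
  calc ((d : ℝ) / (4 * t)) ^ t ≤ (q : ℝ) ^ t := by
        gcongr
        rw [div_le_iff₀ (by positivity)]
        exact_mod_cast (by linarith : d ≤ q * (4 * t))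
    _ ≤ ((distChromIndex G t).toNat : ℝ) := by exact_mod_cast hχ

theorem distance_chromatic_index_odd_cycle_free_no_reduction_general
    (t : ℕ) (ht : 2 ≤ t) (ℓ : ℕ) (hℓOdd : Odd ℓ) :
    ∃ (c C : ℝ) (d₀ : ℕ), 0 < c ∧ 0 < C ∧ 1 ≤ d₀ ∧
      ∀ d : ℕ, d₀ ≤ d →
        ((∀ (V : Type) (_ : Fintype V) (G : SimpleGraph V),
            CycleFree G ℓ → (∀ v : V, (G.neighborSet v).ncard ≤ d) →
            ((distChromIndex G t).toNat : ℝ) ≤ C * (d : ℝ) ^ t) ∧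
         (∃ (V : Type) (_ : Fintype V) (G : SimpleGraph V),
            CycleFree G ℓ ∧ (∀ v : V, (G.neighborSet v).ncard ≤ d) ∧
            c * (d : ℝ) ^ t ≤ ((distChromIndex G t).toNat : ℝ))) := by
  refine ⟨(4 * t : ℝ)⁻¹ ^ t, 3 ^ t, 8 * t, by positivity, by positivity, by omega, fun d hd =>
    ⟨fun V _ G _ hG => distChromIndex_toNat_le_three_pow_mul_pow (by omega) hG t, ?_⟩⟩
  obtain ⟨V, hV, G, hcyc, hG, hχ⟩ := exists_cycleFree_div_pow_le_distChromIndex ht hℓOdd hd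
  exact ⟨V, hV, G, hcyc, hG, by rwa [← inv_mul_eq_div, mul_pow] at hχ⟩

/-- Proposition 3(2): for `t ≥ 2` and `ℓ ≥ 3` odd, the supremum of the distance-`t`
chromatic index over `C_ℓ`-free graphs of maximum degree at most `d` is `Θ(d^t)`. -/
theorem distance_chromatic_index_odd_cycle_free_no_reduction
    (t : ℕ) (ht : 2 ≤ t) (ℓ : ℕ) (hℓ : 3 ≤ ℓ) (hℓOdd : Odd ℓ) :
    ∃ (c C : ℝ) (d₀ : ℕ), 0 < c ∧ 0 < C ∧ 1 ≤ d₀ ∧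
      ∀ d : ℕ, d₀ ≤ d →
        ((∀ (V : Type) (_ : Fintype V) (G : SimpleGraph V),
            CycleFree G ℓ → (∀ v : V, (G.neighborSet v).ncard ≤ d) →
            ((distChromIndex G t).toNat : ℝ) ≤ C * (d : ℝ) ^ t) ∧
         (∃ (V : Type) (_ : Fintype V) (G : SimpleGraph V),
            CycleFree G ℓ ∧ (∀ v : V, (G.neighborSet v).ncard ≤ d) ∧
            c * (d : ℝ) ^ t ≤ ((distChromIndex G t).toNat : ℝ))) :=
  distance_chromatic_index_odd_cycle_free_no_reduction_general t ht ℓ hℓOdd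
end

section
/- Let d be an integer such that d − 1 is a prime power. Then there exists a d-regular bipartite simple graph P of girth 6 such that χ_2(P) = d² − d + 1 and χ'_3(P) = d³ − d² + d. -/
/-!
Take for `P` the point–line incidence graph of the projective plane over the field with
`q = d - 1` elements (Mathlib's `ℙ K (Fin 3 → K)`, incidence being orthogonality). It is
bipartite and `(q + 1)`-regular. Two points lie on at most one common line, so `P` has no
4-cycle, while a triangle of the plane is a 6-cycle.

In `P²` any two points are adjacent (through the line joining them) and a point is adjacent to a
line only if it lies on it. Hence the `q² + q + 1` points form a clique, and giving every line the
colour of a point off it, injectively (Hall's theorem), is an optimal colouring.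

In the line graph of `P`, whose vertices are the flags `(p, l)`, any two flags are at distance at
most 3: `(p, l) ~ (q, l) ~ (q, l') ~ (p', l')` with `q = l ∩ l'`. So `χ'₃(P)` is the number of flags,
`(q² + q + 1)(q + 1)`.
-/

open SimpleGraph
open scoped LinearAlgebra.Projectivization

namespace SimpleGraph

variable {V : Type*} {G : SimpleGraph V}

lemma power_adj_of_edist_le {u v : V} {t : ℕ} (huv : u ≠ v) (h : G.edist u v ≤ t) :
    (G.power t).Adj u v := by
  classical
  obtain ⟨w, hw⟩ := exists_walk_of_edist_ne_top (h.trans_lt (ENat.natCast_lt_top t)).ne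
  refine ⟨huv, w.bypass, w.bypass_isPath, w.length_bypass_le_length.trans ?_⟩
  exact_mod_cast hw.le.trans h

lemma lineGraph_edist_le_one {e f : G.edgeSet} {v : V} (he : v ∈ (e : Sym2 V))
    (hf : v ∈ (f : Sym2 V)) : G.lineGraph.edist e f ≤ 1 := by
  rw [edist_le_one_iff_adj_or_eq, lineGraph_adj_iff_exists]
  by_cases hef : e = f
  · exact .inr hef
  · exact .inl ⟨hef, v, he, hf⟩

lemma Coloring.bipartiteGraph (c : G.Coloring Bool) : BipartiteGraph G :=
  ⟨{v | c v}, fun u v huv => by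
    have h := c.valid huv
    simp only [Set.mem_ofPred_eq]
    revert h
    cases c u <;> cases c v <;> decide⟩

end SimpleGraph

namespace Configuration

variable (P L : Type*) [Membership P L]

def incidenceGraph : SimpleGraph (P ⊕ L) where
  Adj
    | .inl p, .inr l => p ∈ l
    | .inr l, .inl p => p ∈ l
    | _, _ => False
  symm := ⟨by rintro (p | l) (p' | l') h <;> exact h⟩
  loopless := ⟨by rintro (p | l) h <;> exact h⟩

variable {P L}

namespace incidenceGraph

@[simp] lemma adj_inl_inr {p : P} {l : L} : (incidenceGraph P L).Adj (.inl p) (.inr l) ↔ p ∈ l :=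
  .rfl

@[simp] lemma adj_inr_inl {p : P} {l : L} : (incidenceGraph P L).Adj (.inr l) (.inl p) ↔ p ∈ l :=
  .rfl

@[simp] lemma not_adj_inl_inl {p p' : P} : ¬ (incidenceGraph P L).Adj (.inl p) (.inl p') :=
  id

@[simp] lemma not_adj_inr_inr {l l' : L} : ¬ (incidenceGraph P L).Adj (.inr l) (.inr l') :=
  id

def sideColoring : (incidenceGraph P L).Coloring Bool :=
  Coloring.mk Sum.isLeft <| by rintro (p | l) (p' | l') h <;> simp_all

@[simp] lemma sideColoring_apply (v : P ⊕ L) : sideColoring v = v.isLeft :=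
  rfl

lemma bipartiteGraph : BipartiteGraph (incidenceGraph P L) :=
  sideColoring.bipartiteGraph

lemma mem_of_walk_length_le_two {p : P} {l : L} (w : (incidenceGraph P L).Walk (.inl p) (.inr l))
    (hw : w.length ≤ 2) : p ∈ l := by
  have hodd : Odd w.length := (sideColoring.odd_length_iff_not_congr w).mpr (by simp)
  exact w.adj_of_length_eq_one (by obtain ⟨k, hk⟩ := hodd; omega)

lemma ncard_neighborSet_inl (p : P) :
    ((incidenceGraph P L).neighborSet (.inl p)).ncard = lineCount L p := by
  have : (incidenceGraph P L).neighborSet (.inl p) = Sum.inr '' {l | p ∈ l} := by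
    ext (p' | l) <;> simp
  rw [this, Set.ncard_image_of_injective _ Sum.inr_injective, lineCount, ← Nat.card_coe_set_eq]
  rfl

lemma ncard_neighborSet_inr (l : L) :
    ((incidenceGraph P L).neighborSet (.inr l)).ncard = pointCount P l := by
  have : (incidenceGraph P L).neighborSet (.inr l) = Sum.inl '' {p | p ∈ l} := by
    ext (p | l') <;> simp
  rw [this, Set.ncard_image_of_injective _ Sum.inl_injective, pointCount, ← Nat.card_coe_set_eq]
  rfl

noncomputable def flagEquiv : {x : P × L // x.1 ∈ x.2} ≃ (incidenceGraph P L).edgeSet :=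
  Equiv.ofBijective (fun x => ⟨s(.inl x.1.1, .inr x.1.2), x.2⟩) <| by
    refine ⟨fun x y hxy => ?_, fun ⟨e, he⟩ => ?_⟩
    · simpa [Sym2.eq_iff, Prod.ext_iff, Subtype.ext_iff] using hxy
    · induction e with
      | h a b =>
        rcases a with p | l <;> rcases b with p' | l' <;> simp at he
        · exact ⟨⟨(p, l'), he⟩, rfl⟩
        · exact ⟨⟨(p', l), he⟩, Subtype.ext Sym2.eq_swap⟩

@[simp] lemma coe_flagEquiv (x : {x : P × L // x.1 ∈ x.2}) :
    (flagEquiv x : Sym2 (P ⊕ L)) = s(.inl x.1.1, .inr x.1.2) :=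
  rfl

section Nondegenerate

variable [Nondegenerate P L]

lemma eq_or_eq_of_adj {a b c d : P ⊕ L} (hab : (incidenceGraph P L).Adj a b)
    (hbc : (incidenceGraph P L).Adj b c) (hcd : (incidenceGraph P L).Adj c d)
    (hda : (incidenceGraph P L).Adj d a) : a = c ∨ b = d := by
  rcases a with p | l <;> rcases b with p₁ | l₁ <;> rcases c with p₂ | l₂ <;>
    rcases d with p₃ | l₃ <;> simp only [adj_inl_inr, adj_inr_inl, not_adj_inl_inl,
      not_adj_inr_inr, Sum.inl.injEq, Sum.inr.injEq] at hab hbc hcd hda ⊢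
  · exact Nondegenerate.eq_or_eq hab hbc hda hcd
  · exact (Nondegenerate.eq_or_eq hab hda hbc hcd).symm

lemma length_ne_four_of_isCycle {v : P ⊕ L} {w : (incidenceGraph P L).Walk v v}
    (hw : w.IsCycle) : w.length ≠ 4 := by
  intro h4
  have hadj (i : ℕ) (hi : i < 4) := w.adj_getVert_succ (i := i) (by omega)
  have hinj := hw.getVert_injOn'
  rcases eq_or_eq_of_adj (hadj 0 (by norm_num)) (hadj 1 (by norm_num)) (hadj 2 (by norm_num))
    (by simpa [w.getVert_zero, ← h4, w.getVert_length] using hadj 3 (by norm_num)) with h | h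
  · exact absurd (hinj (by simp [h4]) (by simp [h4]) h) (by norm_num)
  · exact absurd (hinj (by simp [h4]) (by simp [h4]) h) (by norm_num)

lemma six_le_egirth : 6 ≤ (incidenceGraph P L).egirth := by
  refine le_egirth.mpr fun v w hw => ?_
  obtain ⟨k, hk⟩ : Even w.length := (sideColoring.even_length_iff_congr w).mpr .rfl
  have := hw.three_le_length
  have := length_ne_four_of_isCycle hw
  exact_mod_cast (show 6 ≤ w.length by omega)

end Nondegenerate

lemma lineGraph_power_three_eq_top [HasPoints P L] :
    (incidenceGraph P L).lineGraph.power 3 = ⊤ := by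
  refine eq_top_iff.mpr fun e f hef => power_adj_of_edist_le hef ?_
  obtain ⟨⟨⟨p, l⟩, hpl⟩, rfl⟩ := flagEquiv.surjective e
  obtain ⟨⟨⟨p', l'⟩, hp'l'⟩, rfl⟩ := flagEquiv.surjective f
  by_cases hll' : l = l'
  · subst hll'
    exact (lineGraph_edist_le_one (v := .inr l) (by simp) (by simp)).trans (by norm_num)
  obtain ⟨hql, hql'⟩ := HasPoints.mkPoint_ax (P := P) hll'
  set e₁ := flagEquiv ⟨(_, l), hql⟩
  set e₂ := flagEquiv ⟨(_, l'), hql'⟩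
  calc _ ≤ _ + (incidenceGraph P L).lineGraph.edist e₂ _ := SimpleGraph.edist_triangle
    _ ≤ _ + (incidenceGraph P L).lineGraph.edist e₁ e₂ + _ := by
      gcongr
      exact SimpleGraph.edist_triangle
    _ ≤ 1 + 1 + 1 := by
      gcongr ?_ + ?_ + ?_
      · exact lineGraph_edist_le_one (v := .inr l) (by simp) (by simp [e₁])
      · exact lineGraph_edist_le_one (v := .inl (HasPoints.mkPoint hll')) (by simp [e₁])
          (by simp [e₂])
      · exact lineGraph_edist_le_one (v := .inr l') (by simp [e₂]) (by simp)
    _ = (3 : ℕ) := rfl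

section ProjectivePlane

variable [ProjectivePlane P L]

lemma exists_isCycle_length_six :
    ∃ (v : P ⊕ L) (w : (incidenceGraph P L).Walk v v), w.IsCycle ∧ w.length = 6 := by
  obtain ⟨p₁, p₂, p₃, -, l, l', hp₁l, -, -, hp₂l, hp₂l', -, hp₃l, hp₃l'⟩ :=
    ProjectivePlane.exists_config (P := P) (L := L)
  have h₁₂ : p₁ ≠ p₂ := (ne_of_mem_of_not_mem hp₂l hp₁l).symm
  have h₁₃ : p₁ ≠ p₃ := (ne_of_mem_of_not_mem hp₃l hp₁l).symm
  have h₂₃ : p₂ ≠ p₃ := ne_of_mem_of_not_mem hp₂l' hp₃l'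
  obtain ⟨hp₁m, hp₂m⟩ := HasLines.mkLine_ax (L := L) h₁₂
  obtain ⟨hp₁n, hp₃n⟩ := HasLines.mkLine_ax (L := L) h₁₃
  set m := HasLines.mkLine (L := L) h₁₂
  set n := HasLines.mkLine (L := L) h₁₃
  have hml : m ≠ l := ne_of_mem_of_not_mem' hp₁m hp₁l
  have hnl : n ≠ l := ne_of_mem_of_not_mem' hp₁n hp₁l
  have hmn : m ≠ n := fun h =>
    hml ((Nondegenerate.eq_or_eq hp₂m (h ▸ hp₃n) hp₂l hp₃l).resolve_left h₂₃)
  refine ⟨.inl p₁, .cons (adj_inl_inr.mpr hp₁m) <| .cons (adj_inr_inl.mpr hp₂m) <|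
    .cons (adj_inl_inr.mpr hp₂l) <| .cons (adj_inr_inl.mpr hp₃l) <|
    .cons (adj_inl_inr.mpr hp₃n) <| .cons (adj_inr_inl.mpr hp₁n) .nil, ?_, rfl⟩
  simp [Walk.cons_isCycle_iff, Walk.isPath_def, h₁₂, h₁₃, h₂₃, hml, hmn, h₁₂.symm, h₁₃.symm,
    hnl.symm]

lemma girth_eq_six : (incidenceGraph P L).girth = 6 := by
  obtain ⟨v, w, hw, h6⟩ := exists_isCycle_length_six (P := P) (L := L)
  have : (incidenceGraph P L).egirth = 6 :=
    le_antisymm ((egirth_le_length hw).trans_eq (by rw [h6]; rfl)) six_le_egirth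
  rw [girth, this]
  rfl

lemma chromaticNumber_power_two [Fintype P] [Fintype L] :
    ((incidenceGraph P L).power 2).chromaticNumber = Fintype.card P := by
  obtain ⟨f, hf, hfl⟩ := Nondegenerate.exists_injective_of_card_le (P := P) (L := L)
    (ProjectivePlane.card_points_eq_card_lines P L).ge
  let coloring : ((incidenceGraph P L).power 2).Coloring P :=
    Coloring.mk (Sum.elim id f) <| by
      rintro (p | l) (p' | l') ⟨hne, w, -, hw⟩ <;> simp only [Sum.elim_inl, Sum.elim_inr, id]
      · exact fun h => hne (congrArg _ h)
      · exact fun h => hfl l' (h ▸ mem_of_walk_length_le_two w hw)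
      · exact fun h => hfl l (h ▸ mem_of_walk_length_le_two w.reverse (by simpa using hw))
      · exact fun h => hne (congrArg _ (hf h))
  let pointsClique : (⊤ : SimpleGraph P) →g (incidenceGraph P L).power 2 :=
    ⟨Sum.inl, fun {p p'} hpp' => by
      obtain ⟨hpm, hp'm⟩ := HasLines.mkLine_ax (L := L) hpp'
      exact power_adj_of_edist_le (by simpa using hpp')
        (edist_le (.cons (adj_inl_inr.mpr hpm) (.cons (adj_inr_inl.mpr hp'm) .nil)))⟩
  rw [← chromaticNumber_top (V := P)]
  exact le_antisymm (chromaticNumber_mono_of_hom coloring)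
    (chromaticNumber_mono_of_hom pointsClique)

lemma ncard_neighborSet [Finite P] [Finite L] (v : P ⊕ L) :
    ((incidenceGraph P L).neighborSet v).ncard = ProjectivePlane.order P L + 1 := by
  rcases v with p | l
  · rw [ncard_neighborSet_inl, ProjectivePlane.lineCount_eq]
  · rw [ncard_neighborSet_inr, ProjectivePlane.pointCount_eq]

lemma card_edgeSet [Fintype P] [Finite L] :
    Nat.card (incidenceGraph P L).edgeSet = Fintype.card P * (ProjectivePlane.order P L + 1) := by
  rw [← Nat.card_congr flagEquiv, Nat.card_congr (Equiv.subtypeProdEquivSigmaSubtype (· ∈ ·)),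
    Nat.card_sigma]
  change ∑ p : P, lineCount L p = _
  simp only [ProjectivePlane.lineCount_eq, Finset.sum_const, Finset.card_univ, smul_eq_mul]

lemma chromaticNumber_lineGraph_power_three [Fintype P] [Finite L] :
    ((incidenceGraph P L).lineGraph.power 3).chromaticNumber =
      (Fintype.card P * (ProjectivePlane.order P L + 1) : ℕ) := by
  rw [lineGraph_power_three_eq_top, chromaticNumber_top_eq_enat_card, ENat.card_eq_coe_natCard,
    card_edgeSet]

end ProjectivePlane

end incidenceGraph

lemma ofField.order_eq (K : Type*) [Field K] [Finite K] [DecidableEq K] :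
    ProjectivePlane.order (ℙ K (Fin 3 → K)) (ℙ K (Fin 3 → K)) = Nat.card K := by
  have : Fintype (ℙ K (Fin 3 → K)) := Fintype.ofFinite _
  have h := ProjectivePlane.card_points (ℙ K (Fin 3 → K)) (ℙ K (Fin 3 → K))
  rw [← Nat.card_eq_fintype_card,
    Projectivization.card_of_finrank K (Fin 3 → K) (Module.finrank_fin_fun K)] at h
  have hmono : StrictMono fun n : ℕ => n ^ 2 + n + 1 := fun a b hab => by dsimp only; gcongr
  refine hmono.injective (h.symm.trans ?_)
  simp only [Finset.sum_range_succ, Finset.sum_range_zero]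
  ring

end Configuration

open Configuration in
/-- Proposition 5, first item: if `d - 1` is a prime power, there is a `d`-regular
bipartite graph `P` of girth 6 with `χ_2(P) = d² - d + 1` and `χ'_3(P) = d³ - d² + d`. -/
theorem projective_plane_incidence_graph_distance_colouring
    (d : ℕ) (h : ∃ p k : ℕ, p.Prime ∧ 0 < k ∧ d - 1 = p ^ k) :
    ∃ (V : Type) (_ : Fintype V) (P : SimpleGraph V),
      (∀ v : V, (P.neighborSet v).ncard = d) ∧ BipartiteGraph P ∧ P.girth = 6 ∧
      (((distChromNum P 2).toNat : ℤ) = (d : ℤ) ^ 2 - d + 1) ∧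
      (((distChromIndex P 3).toNat : ℤ) = (d : ℤ) ^ 3 - (d : ℤ) ^ 2 + d) := by
  classical
  obtain ⟨p, k, hp, hk, hd⟩ := h
  have : Fact p.Prime := ⟨hp⟩
  let Pt := ℙ (GaloisField p k) (Fin 3 → GaloisField p k)
  have : Fintype Pt := Fintype.ofFinite _
  have hn : ProjectivePlane.order Pt Pt + 1 = d := by
    have := pow_pos hp.pos k
    rw [ofField.order_eq, GaloisField.card p k hk.ne']
    omega
  have hcard := ProjectivePlane.card_points Pt Pt
  refine ⟨Pt ⊕ Pt, inferInstance, incidenceGraph Pt Pt,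
    fun v => (incidenceGraph.ncard_neighborSet v).trans hn, incidenceGraph.bipartiteGraph,
    incidenceGraph.girth_eq_six, ?_, ?_⟩
  · rw [distChromNum, incidenceGraph.chromaticNumber_power_two, ENat.toNat_natCast, hcard, ← hn]
    push_cast
    ring
  · rw [distChromIndex, incidenceGraph.chromaticNumber_lineGraph_power_three,
      ENat.toNat_natCast, hcard, ← hn]
    push_cast
    ring
end

section
/- Fix an integer t ≥ 2. For every integer d ≥ 2 with d ≡ 1 (mod t−1), there exists a d-regular bipartite simple graph G whose number of edges is exactly d · ((d−1)/(t−1) + 1)^{t−1} and such that χ'_t(G) equals the number of edges of G; equivalently, (L(G))^t is a complete graph. -/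
/-!
Take `n = t - 1` and `q = (d - 1) / (t - 1) + 1`, and let `G` have two copies of `[q]^n` as
sides, a word on one side being adjacent to every word on the other side at Hamming distance
at most `1`. Then `G` is `(1 + n (q - 1)) = d`-regular with `d q^n` edges. A step of a walk may
keep the word, so any two vertices whose sides differ by `n` mod `2` are joined by a walk of
length exactly `n`. As every edge has an endpoint on each side, any two edges are joined by a
walk of length at most `n + 1 = t` in `L(G)`, i.e. `L(G)^t` is complete.
-/

open Finset Function SimpleGraph

namespace SimpleGraph

variable {V : Type*} {G : SimpleGraph V}

lemma power_eq_top_of_forall_exists_walk {t : ℕ}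
    (h : ∀ u v : V, ∃ w : G.Walk u v, w.length ≤ t) : G.power t = ⊤ := by
  classical
  ext u v
  refine ⟨fun huv => huv.1, fun huv => ?_⟩
  obtain ⟨w, hw⟩ := h u v
  exact ⟨huv, w.bypass, w.bypass_isPath, w.length_bypass_le_length.trans hw⟩

lemma exists_lineGraph_walk_of_walk {x y : V} (w : G.Walk x y) {e f : G.edgeSet}
    (hx : x ∈ (e : Sym2 V)) (hy : y ∈ (f : Sym2 V)) :
    ∃ W : G.lineGraph.Walk e f, W.length ≤ w.length + 1 := by
  induction w generalizing e with
  | nil =>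
    by_cases hef : e = f
    · exact ⟨hef ▸ Walk.nil, by subst hef; simp⟩
    · exact ⟨Walk.cons (lineGraph_adj_iff_exists.mpr ⟨hef, _, hx, hy⟩) Walk.nil, by simp⟩
  | @cons u v y huv w ih =>
    obtain ⟨W, hW⟩ := ih (e := ⟨s(u, v), huv⟩) (Sym2.mem_mk_right u v) hy
    by_cases he : e = ⟨s(u, v), huv⟩
    · subst he
      exact ⟨W, by simp only [Walk.length_cons]; omega⟩
    · have hadj := lineGraph_adj_iff_exists.mpr ⟨he, u, hx, Sym2.mem_mk_left u v⟩
      exact ⟨Walk.cons hadj W, by simp only [Walk.length_cons]; omega⟩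

lemma distChromIndex_eq_ncard_edgeSet_of_forall_exists_walk [Finite V] {t : ℕ}
    (h : ∀ e f : G.edgeSet, ∃ W : G.lineGraph.Walk e f, W.length ≤ t) :
    distChromIndex G t = G.edgeSet.ncard := by
  rw [distChromIndex, power_eq_top_of_forall_exists_walk h, chromaticNumber_top_eq_enat_card,
    Set.coe_ncard_eq_encard, Set.encard]

lemma two_mul_ncard_edgeSet [Finite V] {d : ℕ} (h : ∀ v, (G.neighborSet v).ncard = d) :
    2 * G.edgeSet.ncard = Nat.card V * d := by
  classical
  have := Fintype.ofFinite V
  rw [Set.ncard_eq_toFinset_card', ← edgeFinset, ← sum_degrees_eq_twice_card_edges,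
    Nat.card_eq_fintype_card, ← card_univ, ← smul_eq_mul, ← sum_const]
  refine sum_congr rfl fun v _ => ?_
  rw [← h v, ← card_neighborSet_eq_degree, Set.ncard_eq_toFinset_card', Set.toFinset_card]

end SimpleGraph

section Hamming

variable {ι β : Type*} [Fintype ι] [DecidableEq ι] [DecidableEq β]

lemma hammingDist_update_self_le (a : ι → β) (i : ι) (x : β) :
    hammingDist a (update a i x) ≤ 1 := by
  refine (card_le_card fun j hj => ?_).trans (card_singleton i).le
  by_contra hji
  exact (mem_filter.mp hj).2 (update_of_ne (mem_singleton.not.mp hji) x a).symm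

lemma hammingDist_update_apply_of_ne {a b : ι → β} {i : ι} (h : a i ≠ b i) :
    hammingDist (update a i (b i)) b + 1 = hammingDist a b := by
  have : ({j | update a i (b i) j ≠ b j} : Finset ι) =
      ({j | a j ≠ b j} : Finset ι).erase i := by
    ext j
    by_cases hji : j = i
    · subst hji; simp
    · simp [hji]
  rw [hammingDist, hammingDist, this, card_erase_add_one (by simpa using h)]

lemma exists_hammingDist_le_one_of_le_succ {a b : ι → β} {L : ℕ}
    (h : hammingDist a b ≤ L + 1) : ∃ c, hammingDist a c ≤ 1 ∧ hammingDist c b ≤ L := by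
  by_cases hab : a = b
  · exact ⟨a, by simp, by simp [hab]⟩
  obtain ⟨i, hi⟩ := Function.ne_iff.mp hab
  exact ⟨update a i (b i), hammingDist_update_self_le a i (b i),
    by have := hammingDist_update_apply_of_ne hi; omega⟩

lemma eq_update_of_hammingDist_le_one {a b : ι → β} {i : ι} (h : hammingDist a b ≤ 1)
    (hi : a i ≠ b i) : b = update a i (b i) := by
  ext j
  by_cases hji : j = i
  · subst hji; simp
  rw [update_of_ne hji]
  by_contra hj
  have hsub : ({i, j} : Finset ι) ⊆ ({k | a k ≠ b k} : Finset ι) := by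
    simp [insert_subset_iff, hi, Ne.symm hj]
  have := card_le_card hsub
  rw [card_pair (Ne.symm hji)] at this
  exact absurd (this.trans h) (by norm_num)

variable [Fintype β]

lemma card_hammingDist_le_one (a : ι → β) :
    #{b | hammingDist a b ≤ 1} = 1 + Fintype.card ι * (Fintype.card β - 1) := by
  let φ : Option (Σ i, {y // y ≠ a i}) → ι → β
    | none => a
    | some ⟨i, y⟩ => update a i y
  have hφ : Injective φ := by
    rintro (_ | ⟨i, y, hy⟩) (_ | ⟨j, z, hz⟩) h
    · rfl
    · exact absurd (congrFun h j) (by simpa [φ] using hz.symm)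
    · exact absurd (congrFun h i) (by simpa [φ] using hy)
    · obtain rfl : i = j := by
        by_contra hij
        exact hy (by simpa [φ, update_of_ne hij] using congrFun h i)
      obtain rfl : y = z := by simpa [φ] using congrFun h i
      rfl
  have hrange : ({b | hammingDist a b ≤ 1} : Finset (ι → β)) = univ.image φ := by
    ext b
    simp only [mem_filter, mem_univ, true_and, mem_image]
    constructor
    · intro hb
      by_cases hab : a = b
      · exact ⟨none, hab⟩
      obtain ⟨i, hi⟩ := Function.ne_iff.mp hab
      exact ⟨some ⟨i, b i, Ne.symm hi⟩, (eq_update_of_hammingDist_le_one hb hi).symm⟩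
    · rintro ⟨_ | ⟨i, y, -⟩, rfl⟩
      · simp [φ]
      · exact hammingDist_update_self_le a i y
  rw [hrange, card_image_of_injective _ hφ, card_univ, Fintype.card_option, Fintype.card_sigma]
  simp [Fintype.card_subtype_compl, add_comm]

end Hamming

lemma ZMod.two_ne_iff_eq_add_one {i j : ZMod 2} : i ≠ j ↔ j = i + 1 := by
  revert i j; decide

section BipartiteHamming

variable (ι β : Type*) [Fintype ι] [DecidableEq β]

def bipartiteHamming : SimpleGraph (ZMod 2 × (ι → β)) where
  Adj u v := u.1 ≠ v.1 ∧ hammingDist u.2 v.2 ≤ 1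
  symm := ⟨fun u v h => ⟨h.1.symm, hammingDist_comm u.2 v.2 ▸ h.2⟩⟩
  loopless := ⟨fun _ h => h.1 rfl⟩

variable {ι β}

@[simp] lemma bipartiteHamming_adj {u v : ZMod 2 × (ι → β)} :
    (bipartiteHamming ι β).Adj u v ↔ u.1 ≠ v.1 ∧ hammingDist u.2 v.2 ≤ 1 := Iff.rfl

lemma bipartiteGraph_bipartiteHamming : BipartiteGraph (bipartiteHamming ι β) :=
  ⟨{v | v.1 = 0}, fun u v h => by
    show u.1 = 0 ↔ ¬v.1 = 0
    rw [ZMod.two_ne_iff_eq_add_one.mp h.1]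
    generalize u.1 = i
    revert i; decide⟩

lemma exists_bipartiteHamming_walk_length_eq [DecidableEq ι] (L : ℕ) (i : ZMod 2)
    {a b : ι → β} (h : hammingDist a b ≤ L) :
    ∃ w : (bipartiteHamming ι β).Walk (i, a) (i + L, b), w.length = L := by
  induction L generalizing i a with
  | zero =>
    obtain rfl : a = b := hammingDist_eq_zero.mp (Nat.le_zero.mp h)
    exact ⟨Walk.nil.copy rfl (by simp), by simp⟩
  | succ L ih =>
    obtain ⟨c, hac, hcb⟩ := exists_hammingDist_le_one_of_le_succ h
    obtain ⟨w, hw⟩ := ih (i + 1) hcb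
    have hadj : (bipartiteHamming ι β).Adj (i, a) (i + 1, c) := ⟨by simp, hac⟩
    refine ⟨(Walk.cons hadj w).copy rfl (by push_cast; ring_nf), ?_⟩
    simp [hw]

lemma exists_mem_edge_bipartiteHamming_fst_eq (e : (bipartiteHamming ι β).edgeSet)
    (i : ZMod 2) : ∃ v ∈ (e : Sym2 (ZMod 2 × (ι → β))), v.1 = i := by
  obtain ⟨e, he⟩ := e
  induction e using Sym2.ind with
  | _ u v =>
    by_cases hu : u.1 = i
    · exact ⟨u, Sym2.mem_mk_left u v, hu⟩
    · refine ⟨v, Sym2.mem_mk_right u v, ?_⟩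
      rw [ZMod.two_ne_iff_eq_add_one.mp he.1, (ZMod.two_ne_iff_eq_add_one.mp hu).symm]

lemma exists_lineGraph_bipartiteHamming_walk_length_le [DecidableEq ι]
    (e f : (bipartiteHamming ι β).edgeSet) :
    ∃ W : (bipartiteHamming ι β).lineGraph.Walk e f, W.length ≤ Fintype.card ι + 1 := by
  obtain ⟨u, hu, -⟩ := exists_mem_edge_bipartiteHamming_fst_eq e 0
  -- one endpoint of `f` lies on the side reached from `u` after exactly `card ι` steps
  obtain ⟨v, hv, hv1⟩ := exists_mem_edge_bipartiteHamming_fst_eq f (u.1 + Fintype.card ι)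
  obtain ⟨w, hw⟩ := exists_bipartiteHamming_walk_length_eq (Fintype.card ι) u.1
    (hammingDist_le_card_fintype (x := u.2) (y := v.2))
  rw [← hw, ← w.length_copy rfl (Prod.ext hv1.symm rfl)]
  exact exists_lineGraph_walk_of_walk _ hu hv

end BipartiteHamming

section Counting

variable {ι β : Type*} [Fintype ι] [DecidableEq ι] [Fintype β] [DecidableEq β]

lemma ncard_neighborSet_bipartiteHamming (v : ZMod 2 × (ι → β)) :
    ((bipartiteHamming ι β).neighborSet v).ncard =
      1 + Fintype.card ι * (Fintype.card β - 1) := by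
  have : (bipartiteHamming ι β).neighborSet v =
      (fun b => (v.1 + 1, b)) '' ↑({b | hammingDist v.2 b ≤ 1} : Finset (ι → β)) := by
    ext ⟨j, b⟩
    simp [ZMod.two_ne_iff_eq_add_one, and_comm, eq_comm (a := j)]
  rw [this, Set.ncard_image_of_injective _ fun b c h => (Prod.ext_iff.mp h).2,
    Set.ncard_coe_finset, card_hammingDist_le_one]

lemma ncard_edgeSet_bipartiteHamming :
    (bipartiteHamming ι β).edgeSet.ncard =
      (1 + Fintype.card ι * (Fintype.card β - 1)) * Fintype.card β ^ Fintype.card ι := by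
  have := two_mul_ncard_edgeSet (G := bipartiteHamming ι β) ncard_neighborSet_bipartiteHamming
  simp only [Nat.card_eq_fintype_card, Fintype.card_prod, ZMod.card, Fintype.card_fun] at this
  linarith

end Counting

theorem bipartite_regular_graph_line_graph_power_clique_general
    (t : ℕ) (d : ℕ) (hd : 2 ≤ d) (hmod : (t - 1) ∣ (d - 1)) :
    ∃ (V : Type) (_ : Fintype V) (G : SimpleGraph V),
      (∀ v : V, (G.neighborSet v).ncard = d) ∧ BipartiteGraph G ∧
      G.edgeSet.ncard = d * ((d - 1) / (t - 1) + 1) ^ (t - 1) ∧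
      distChromIndex G t = (G.edgeSet.ncard : ℕ∞) := by
  have ht : t - 1 ≠ 0 := by
    rintro ht
    rw [ht, zero_dvd_iff] at hmod
    omega
  obtain ⟨m, hm⟩ := hmod
  have hdeg : 1 + Fintype.card (Fin (t - 1)) * (Fintype.card (Fin (m + 1)) - 1) = d := by
    simp only [Fintype.card_fin, Nat.add_sub_cancel]
    omega
  refine ⟨_, inferInstance, bipartiteHamming (Fin (t - 1)) (Fin (m + 1)),
    fun v => hdeg ▸ ncard_neighborSet_bipartiteHamming v, bipartiteGraph_bipartiteHamming,
    ?_, distChromIndex_eq_ncard_edgeSet_of_forall_exists_walk fun e f => ?_⟩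
  · rw [ncard_edgeSet_bipartiteHamming, hdeg, hm, Nat.mul_div_cancel_left m (by omega)]
    simp
  · obtain ⟨W, hW⟩ := exists_lineGraph_bipartiteHamming_walk_length_le e f
    exact ⟨W, by simp only [Fintype.card_fin] at hW; omega⟩

/-- Proposition 10: for fixed `t ≥ 2` and every `d ≥ 2` with `d ≡ 1 (mod t-1)`, there is
a `d`-regular bipartite graph `G` with exactly `d ((d-1)/(t-1) + 1)^{t-1}` edges whose
distance-`t` chromatic index equals its number of edges. -/
theorem bipartite_regular_graph_line_graph_power_clique
    (t : ℕ) (ht : 2 ≤ t) (d : ℕ) (hd : 2 ≤ d) (hmod : (t - 1) ∣ (d - 1)) :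
    ∃ (V : Type) (_ : Fintype V) (G : SimpleGraph V),
      (∀ v : V, (G.neighborSet v).ncard = d) ∧ BipartiteGraph G ∧
      G.edgeSet.ncard = d * ((d - 1) / (t - 1) + 1) ^ (t - 1) ∧
      distChromIndex G t = (G.edgeSet.ncard : ℕ∞) :=
  bipartite_regular_graph_line_graph_power_clique_general t d hd hmod
end
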